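/- arXiv:1612.09265 — 2 statements merged into one kernel-verified Lean document; each statement's English description precedes it below -/
import Mathlib

section
/- Let X_1, ..., X_n be i.i.d. Pareto(α) random variables, i.e., with distribution function F(x) = 1 - x^{-α} for x ≥ 1 (and F(x)=0 for x < 1), where α > 0. Then for any κ ∈ (0,1), the probability P(X_{(n-1)} ≤ κ X_{(n)}) converges to κ^α as n → ∞. -/
/-!
For `n ≥ 2` the probability is in fact exactly `κ ^ α`. Almost surely every `X i` is positive, and
then `X_(n-1) ≤ κ X_(n)` happens exactly when some `X i` dominates all the others by the factor
`κ⁻¹`; these `n` events are almost surely disjoint. By independence the `i`-th one has probability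
`∫ F(κx)^(n-1) dP(x)` with `F` the Pareto distribution function, and on `x > κ⁻¹` the integrand
`α x^(-(α+1)) (1 - (κx)^(-α))^(n-1)` has the antiderivative `κ^α / n · (1 - (κx)^(-α))^n`, so the
integral is `κ^α / n`.
-/

open MeasureTheory ProbabilityTheory Set Filter Topology Function

theorem iInf_iSup_ne_le_mul_iSup_iff {ι : Type*} [Finite ι] [Nontrivial ι] {f : ι → ℝ}
    (hf : ∀ i, 0 < f i) {κ : ℝ} (hκ : κ < 1) :
    (⨅ i : ι, ⨆ j : {j // j ≠ i}, f j) ≤ κ * ⨆ i, f i ↔ ∃ i, ∀ j, j ≠ i → f j ≤ κ * f i := by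
  have : ∀ i : ι, Nonempty {j // j ≠ i} := fun i => nonempty_subtype.2 (exists_ne i)
  have le_iSup_ne {i j : ι} (hji : j ≠ i) : f j ≤ ⨆ k : {k // k ≠ i}, f k :=
    le_ciSup (f := fun k : {k // k ≠ i} => f k) (Finite.bddAbove_range _) ⟨j, hji⟩
  obtain ⟨i₀, hi₀⟩ := exists_eq_ciSup_of_finite (f := f)
  constructor
  · intro h
    obtain ⟨i₁, hi₁⟩ := exists_eq_ciInf_of_finite (f := fun i : ι => ⨆ j : {j // j ≠ i}, f j)
    rw [← hi₀, ← hi₁] at h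
    -- leaving out anything but a maximiser of `f` keeps the maximum `f i₀ > κ f i₀`
    obtain rfl : i₁ = i₀ := by
      by_contra hne
      have := (le_iSup_ne (Ne.symm hne)).trans h
      nlinarith [hf i₀]
    exact ⟨i₁, fun j hj => (le_iSup_ne hj).trans h⟩
  · rintro ⟨i, hi⟩
    have hmax : ⨆ j, f j = f i := by
      refine le_antisymm (ciSup_le fun j => ?_) (le_ciSup (Finite.bddAbove_range f) i)
      rcases eq_or_ne j i with rfl | hj
      · exact le_rfl
      · nlinarith [hi j hj, hf i]
    calc (⨅ i : ι, ⨆ j : {j // j ≠ i}, f j) ≤ ⨆ j : {j // j ≠ i}, f j :=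
          ciInf_le (Finite.bddBelow_range _) i
      _ ≤ κ * f i := ciSup_le fun j => hi j j.2
      _ = κ * ⨆ j, f j := by rw [hmax]

theorem lintegral_Ioi_ofReal_eq_of_hasDerivAt_of_nonneg {g g' : ℝ → ℝ} {a l : ℝ}
    (hderiv : ∀ x ∈ Ici a, HasDerivAt g (g' x) x) (hg' : ∀ x ∈ Ioi a, 0 ≤ g' x)
    (hg : Tendsto g atTop (𝓝 l)) :
    ∫⁻ x in Ioi a, ENNReal.ofReal (g' x) = ENNReal.ofReal (l - g a) := by
  rw [← ofReal_integral_eq_lintegral_ofReal (integrableOn_Ioi_deriv_of_nonneg' hderiv hg' hg)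
    ((ae_restrict_iff' measurableSet_Ioi).2 (ae_of_all _ hg')),
    integral_Ioi_of_hasDerivAt_of_nonneg' hderiv hg' hg]

namespace ProbabilityTheory

variable {Ω : Type*} [MeasurableSpace Ω] {μ : Measure Ω}

theorem IndepFun.measure_preimage_prodMk_eq_lintegral {α β : Type*} [MeasurableSpace α]
    [MeasurableSpace β] [IsFiniteMeasure μ] {X : Ω → α} {Y : Ω → β} (hXY : IndepFun X Y μ)
    (hX : AEMeasurable X μ) (hY : AEMeasurable Y μ) {s : Set (α × β)} (hs : MeasurableSet s) :
    μ ((fun ω => (X ω, Y ω)) ⁻¹' s) = ∫⁻ x, μ.map Y (Prod.mk x ⁻¹' s) ∂μ.map X := by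
  rw [← Measure.map_apply_of_aemeasurable (hX.prodMk hY) hs,
    (indepFun_iff_map_prod_eq_prod_map_map hX hY).1 hXY, Measure.prod_apply hs]

theorem iIndepFun.measure_forall_le_mul_eq_lintegral {ι : Type*} {X : ι → Ω → ℝ}
    (hX : ∀ i, AEMeasurable (X i) μ) (hindep : iIndepFun X μ) {i : ι} {S : Finset ι}
    (hi : i ∉ S) (c : ℝ) :
    μ {ω | ∀ j ∈ S, X j ω ≤ c * X i ω} = ∫⁻ x, ∏ j ∈ S, μ {ω | X j ω ≤ c * x} ∂μ.map (X i) := by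
  have := hindep.isProbabilityMeasure
  have hXS : IndepFun (X i) (fun ω (j : S) => X j ω) μ :=
    (hindep.indepFun_finset₀ {i} S (Finset.disjoint_singleton_left.2 hi) hX).comp
      (measurable_pi_apply (⟨i, Finset.mem_singleton_self i⟩ : ({i} : Finset ι))) measurable_id
  have hs : MeasurableSet {p : ℝ × (S → ℝ) | ∀ j, p.2 j ≤ c * p.1} := by
    simp only [ofPred_forall]
    exact .iInter fun j => measurableSet_le (by fun_prop) (by fun_prop)
  have hS : AEMeasurable (fun ω (j : S) => X j ω) μ := aemeasurable_pi_lambda _ fun j => hX j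
  convert hXS.measure_preimage_prodMk_eq_lintegral (hX i) hS hs using 1
  · congr 1
    ext ω
    simp
  · refine lintegral_congr fun x => ?_
    rw [Measure.map_apply_of_aemeasurable hS (measurable_prodMk_left hs),
      ← hindep.meas_biInter (S := S) (s := fun j => {ω | X j ω ≤ c * x})
        (fun j _ => ⟨Iic (c * x), measurableSet_Iic, rfl⟩)]
    congr 1
    ext ω
    simp

noncomputable def paretoCDF (α x : ℝ) : ℝ := if 1 ≤ x then 1 - x ^ (-α) else 0

variable {α : ℝ}

theorem paretoCDF_nonneg (hα : 0 ≤ α) (x : ℝ) : 0 ≤ paretoCDF α x := by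
  unfold paretoCDF
  split_ifs with h
  · linarith [Real.rpow_le_one_of_one_le_of_nonpos h (neg_nonpos.2 hα)]
  · rfl

theorem paretoCDF_eq_zero_of_le_one {x : ℝ} (hx : x ≤ 1) : paretoCDF α x = 0 := by
  unfold paretoCDF
  split_ifs with h
  · simp [le_antisymm hx h]
  · rfl

theorem paretoMeasure_Ioi (hα : 0 < α) {x : ℝ} (hx : 1 ≤ x) :
    paretoMeasure 1 α (Ioi x) = ENNReal.ofReal (x ^ (-α)) := by
  have hpdf : ∀ y ∈ Ioi x, paretoPDF 1 α y = ENNReal.ofReal (α * y ^ (-(α + 1))) := fun y hy => by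
    rw [paretoPDF_of_le (hx.trans hy.le), Real.one_rpow, mul_one]
  have hderiv : ∀ y ∈ Ici x, HasDerivAt (fun y => -y ^ (-α)) (α * y ^ (-(α + 1))) y :=
    fun y hy => (Real.hasDerivAt_rpow_const (p := -α)
      (Or.inl (zero_lt_one.trans_le (hx.trans hy)).ne')).neg.congr_deriv (by ring_nf)
  have hlim : Tendsto (fun y : ℝ => -y ^ (-α)) atTop (𝓝 0) := by
    simpa using (tendsto_rpow_neg_atTop hα).neg
  rw [paretoMeasure, withDensity_apply _ measurableSet_Ioi,
    setLIntegral_congr_fun measurableSet_Ioi hpdf,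
    lintegral_Ioi_ofReal_eq_of_hasDerivAt_of_nonneg hderiv
      (fun y hy => by have := zero_lt_one.trans_le (hx.trans hy.le); positivity) hlim,
    zero_sub, neg_neg]

theorem paretoMeasure_Iic (hα : 0 < α) (x : ℝ) :
    paretoMeasure 1 α (Iic x) = ENNReal.ofReal (paretoCDF α x) := by
  have := isProbabilityMeasure_paretoMeasure one_pos hα
  by_cases hx : 1 ≤ x
  · rw [← compl_Ioi, prob_compl_eq_one_sub measurableSet_Ioi, paretoMeasure_Ioi hα hx, paretoCDF,
      if_pos hx, ENNReal.ofReal_sub _ (by positivity), ENNReal.ofReal_one]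
  · rw [not_le] at hx
    rw [paretoCDF_eq_zero_of_le_one hx.le, ENNReal.ofReal_zero]
    refine measure_mono_null (Iic_subset_Iio.2 hx) ?_
    rw [paretoMeasure, withDensity_apply _ measurableSet_Iio]
    exact lintegral_paretoPDF_of_le le_rfl

theorem hasLaw_paretoMeasure_of_cdf [IsFiniteMeasure μ] {X : Ω → ℝ} (hX : AEMeasurable X μ)
    (hα : 0 < α) (hcdf : ∀ x, μ {ω | X ω ≤ x} = ENNReal.ofReal (paretoCDF α x)) :
    HasLaw X (paretoMeasure 1 α) μ where
  aemeasurable := hX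
  map_eq := Measure.ext_of_Iic _ _ fun x => by
    rw [Measure.map_apply_of_aemeasurable hX measurableSet_Iic, paretoMeasure_Iic hα]
    exact hcdf x

theorem lintegral_ofReal_paretoCDF_mul_pow (hα : 0 < α) {κ : ℝ} (hκ0 : 0 < κ) (hκ1 : κ ≤ 1)
    {m : ℕ} (hm : m ≠ 0) :
    ∫⁻ x, ENNReal.ofReal (paretoCDF α (κ * x)) ^ m ∂paretoMeasure 1 α
      = ENNReal.ofReal (κ ^ α / (m + 1)) := by
  set G : ℝ → ℝ := fun y => κ ^ α / (m + 1) * (1 - κ ^ (-α) * y ^ (-α)) ^ (m + 1)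
  set φ : ℝ → ℝ := fun y => α * y ^ (-(α + 1)) * (1 - κ ^ (-α) * y ^ (-α)) ^ m
  have hG : ∀ x ∈ Ici κ⁻¹, HasDerivAt G (φ x) x := fun x hx => by
    have hx0 : 0 < x := (inv_pos.2 hκ0).trans_le hx
    refine ((((Real.hasDerivAt_rpow_const (p := -α) (Or.inl hx0.ne')).const_mul
      (κ ^ (-α))).const_sub 1).pow (m + 1)).const_mul (κ ^ α / (m + 1)) |>.congr_deriv ?_
    simp only [φ]
    rw [show -α - 1 = -(α + 1) by ring, Real.rpow_neg hκ0.le]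
    field_simp
    push_cast
    ring
  have hGκ : G κ⁻¹ = 0 := by
    simp [G, ← Real.mul_rpow hκ0.le (inv_nonneg.2 hκ0.le), hκ0.ne']
  have hlim : Tendsto G atTop (𝓝 (κ ^ α / (m + 1))) := by
    simpa [G] using ((((tendsto_rpow_neg_atTop hα).const_mul (κ ^ (-α))).const_sub 1).pow
      (m + 1)).const_mul (κ ^ α / (m + 1))
  have hF : ∀ x ∈ Ioi κ⁻¹, paretoCDF α (κ * x) = 1 - κ ^ (-α) * x ^ (-α) := fun x hx => by
    have hx0 : 0 < x := (inv_pos.2 hκ0).trans hx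
    rw [paretoCDF, if_pos ((inv_lt_iff_one_lt_mul₀' hκ0).1 hx).le, Real.mul_rpow hκ0.le hx0.le]
  have hφ : ∀ x ∈ Ioi κ⁻¹, 0 ≤ φ x := fun x hx => by
    have := paretoCDF_nonneg hα.le (κ * x)
    have hx0 : 0 < x := (inv_pos.2 hκ0).trans hx
    simp only [φ, ← hF x hx]
    positivity
  have hintegrand : ∀ x, paretoPDF 1 α x * ENNReal.ofReal (paretoCDF α (κ * x)) ^ m
      = (Ioi κ⁻¹).indicator (fun y => ENNReal.ofReal (φ y)) x := fun x => by
    by_cases hx : x ∈ Ioi κ⁻¹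
    · have hx1 : 1 ≤ x := ((one_le_inv₀ hκ0).2 hκ1).trans hx.le
      rw [indicator_of_mem hx, paretoPDF_of_le hx1, Real.one_rpow, mul_one, hF x hx,
        ← ENNReal.ofReal_pow (hF x hx ▸ paretoCDF_nonneg hα.le _),
        ← ENNReal.ofReal_mul (by positivity)]
    · have hκx : κ * x ≤ 1 := le_of_not_gt fun h => hx ((inv_lt_iff_one_lt_mul₀' hκ0).2 h)
      rw [indicator_of_notMem hx, paretoCDF_eq_zero_of_le_one hκx, ENNReal.ofReal_zero,
        zero_pow hm, mul_zero]
  rw [paretoMeasure, lintegral_withDensity_eq_lintegral_mul_non_measurable _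
    (show Measurable (paretoPDF 1 α) from (measurable_paretoPDFReal 1 α).ennreal_ofReal)
    (ae_of_all _ fun _ => ENNReal.ofReal_lt_top)]
  simp_rw [Pi.mul_apply, hintegrand]
  rw [lintegral_indicator measurableSet_Ioi,
    lintegral_Ioi_ofReal_eq_of_hasDerivAt_of_nonneg hG hφ hlim, hGκ, sub_zero]

variable {ι : Type*} {X : ι → Ω → ℝ} {κ : ℝ}

theorem iIndepFun.measure_forall_le_mul_of_hasLaw_pareto (hindep : iIndepFun X μ)
    (hlaw : ∀ i, HasLaw (X i) (paretoMeasure 1 α) μ) (hα : 0 < α) (hκ0 : 0 < κ) (hκ1 : κ ≤ 1)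
    {i : ι} {S : Finset ι} (hi : i ∉ S) (hS : S.Nonempty) :
    μ {ω | ∀ j ∈ S, X j ω ≤ κ * X i ω} = ENNReal.ofReal (κ ^ α / (S.card + 1)) := by
  have hcdf : ∀ j y, μ {ω | X j ω ≤ y} = ENNReal.ofReal (paretoCDF α y) := fun j y =>
    ((hlaw j).measure_eq (p := (· ≤ y)) measurableSet_Iic).trans (paretoMeasure_Iic hα y)
  simp_rw [hindep.measure_forall_le_mul_eq_lintegral (fun j => (hlaw j).aemeasurable) hi,
    (hlaw i).map_eq, hcdf, Finset.prod_const]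
  exact lintegral_ofReal_paretoCDF_mul_pow hα hκ0 hκ1 hS.card_ne_zero

theorem iIndepFun.measure_iInf_iSup_ne_le_mul_iSup_of_hasLaw_pareto [Fintype ι] [Nontrivial ι]
    (hindep : iIndepFun X μ) (hlaw : ∀ i, HasLaw (X i) (paretoMeasure 1 α) μ) (hα : 0 < α)
    (hκ0 : 0 < κ) (hκ1 : κ < 1) :
    μ {ω | (⨅ i : ι, ⨆ j : {j // j ≠ i}, X j ω) ≤ κ * ⨆ i, X i ω} = ENNReal.ofReal (κ ^ α) := by
  classical
  set A : ι → Set Ω := fun i => {ω | ∀ j ∈ Finset.univ.erase i, X j ω ≤ κ * X i ω}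
  have hpos : ∀ᵐ ω ∂μ, ∀ i, 0 < X i ω := ae_all_iff.2 fun i => by
    simp_rw [ae_iff, not_lt]
    rw [(hlaw i).measure_eq (p := (· ≤ 0)) measurableSet_Iic]
    exact (paretoMeasure_Iic hα 0).trans
      (by rw [paretoCDF_eq_zero_of_le_one zero_le_one, ENNReal.ofReal_zero])
  have hunion : {ω | (⨅ i : ι, ⨆ j : {j // j ≠ i}, X j ω) ≤ κ * ⨆ i, X i ω} =ᵐ[μ] ⋃ i, A i :=
    eventuallyEq_set.2 <| hpos.mono fun ω hω => by
      simpa [A] using iInf_iSup_ne_le_mul_iSup_iff hω hκ1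
  have hdisj : Pairwise (AEDisjoint μ on A) := fun i j hij => by
    refine measure_mono_null (fun ω ⟨hωi, hωj⟩ => ?_) (ae_iff.1 hpos)
    show ¬∀ k, 0 < X k ω
    intro hω
    have := hωi j (by simpa using hij.symm)
    have := hωj i (by simpa using hij)
    nlinarith [hω i, hω j]
  have hA : ∀ i, NullMeasurableSet (A i) μ := fun i => by
    simp only [A, ofPred_forall]
    exact .iInter fun j => .iInter fun _ =>
      nullMeasurableSet_le (hlaw j).aemeasurable ((hlaw i).aemeasurable.const_mul κ)
  have hμA : ∀ i, μ (A i) = ENNReal.ofReal (κ ^ α / Fintype.card ι) := fun i => by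
    rw [hindep.measure_forall_le_mul_of_hasLaw_pareto hlaw hα hκ0 hκ1.le
      (Finset.notMem_erase i _) Finset.univ_nontrivial.erase_nonempty,
      Finset.card_erase_of_mem (Finset.mem_univ i), Finset.card_univ,
      Nat.cast_pred Fintype.card_pos, sub_add_cancel]
  rw [measure_congr hunion, measure_iUnion₀ hdisj hA, tsum_fintype,
    Finset.sum_congr rfl fun i _ => hμA i, Finset.sum_const, Finset.card_univ, nsmul_eq_mul,
    ← ENNReal.ofReal_natCast, ← ENNReal.ofReal_mul (by positivity), mul_div_cancel₀ _ (by positivity)]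

end ProbabilityTheory

theorem pareto_outlier_probability_tendsto_general
    {Ω : Type*} [MeasurableSpace Ω] (μ : Measure Ω)
    (X : ℕ → Ω → ℝ)
    (hmeas : ∀ i, Measurable (X i))
    (hindep : iIndepFun X μ)
    (α : ℝ) (hα : 0 < α)
    (hcdf : ∀ i x, μ {ω | X i ω ≤ x}
        = ENNReal.ofReal (if 1 ≤ x then 1 - x ^ (-α) else 0))
    (κ : ℝ) (hκ : κ ∈ Ioo (0 : ℝ) 1) :
    Tendsto (fun n : ℕ =>
        (μ {ω | (⨅ i : Fin n, ⨆ j : {j : Fin n // j ≠ i}, X j ω)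
            ≤ κ * ⨆ i : Fin n, X i ω}).toReal)
      atTop (nhds (κ ^ α)) := by
  have := hindep.isProbabilityMeasure
  have hlaw : ∀ i, HasLaw (X i) (paretoMeasure 1 α) μ := fun i =>
    hasLaw_paretoMeasure_of_cdf (hmeas i).aemeasurable hα (hcdf i)
  refine tendsto_const_nhds.congr' ?_
  filter_upwards [eventually_ge_atTop 2] with n hn
  have : Nontrivial (Fin n) := Fin.nontrivial_iff_two_le.2 hn
  rw [(hindep.precomp Fin.val_injective).measure_iInf_iSup_ne_le_mul_iSup_of_hasLaw_pareto
    (fun i => hlaw i) hα hκ.1 hκ.2, ENNReal.toReal_ofReal (Real.rpow_nonneg hκ.1.le α)]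

/-- For i.i.d. Pareto(α) random variables (CDF `F(x) = 1 - x^(-α)` for `x ≥ 1`, `0` else),
the probability that the second largest of the first `n` observations is at most `κ` times
the largest tends to `κ^α` as `n → ∞`, for any fixed `κ ∈ (0,1)`. -/
theorem pareto_outlier_probability_tendsto
    {Ω : Type*} [MeasurableSpace Ω] (μ : Measure Ω) [IsProbabilityMeasure μ]
    (X : ℕ → Ω → ℝ)
    (hmeas : ∀ i, Measurable (X i))
    (hindep : iIndepFun X μ)
    (α : ℝ) (hα : 0 < α)
    (hcdf : ∀ i x, μ {ω | X i ω ≤ x}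
        = ENNReal.ofReal (if 1 ≤ x then 1 - x ^ (-α) else 0))
    (κ : ℝ) (hκ : κ ∈ Ioo (0 : ℝ) 1) :
    Tendsto (fun n : ℕ =>
        (μ {ω | (⨅ i : Fin n, ⨆ j : {j : Fin n // j ≠ i}, X j ω)
            ≤ κ * ⨆ i : Fin n, X i ω}).toReal)
      atTop (nhds (κ ^ α)) :=
  pareto_outlier_probability_tendsto_general μ X hmeas hindep α hα hcdf κ hκ
end

section
/- Let X_1, ..., X_n be i.i.d. standard exponential random variables with CDF F(x) = 1 - e^{-x} for x ≥ 0. Then for any fixed κ ∈ (0,1), lim_{n→∞} n ∫_0^∞ (1-e^{-κy})^{n-1} e^{-y} dy = 0, i.e., the probability that X_{(n-1)} ≤ κ X_{(n)} tends to 0 as n → ∞. -/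
open MeasureTheory Set Filter

set_option maxHeartbeats 1000000

lemma aux_geom_bound (a : ℝ) (h0 : 0 ≤ a) (h1 : a < 1) (n : ℕ) :
    (n : ℝ) * a ^ (n - 1) * (1 - a) ≤ 1 := by
  have hsum : (n : ℝ) * a ^ (n - 1) ≤ ∑ k ∈ Finset.range n, a ^ k := by
    calc (n : ℝ) * a ^ (n - 1) = ∑ _k ∈ Finset.range n, a ^ (n - 1) := by
          simp [mul_comm]
      _ ≤ ∑ k ∈ Finset.range n, a ^ k := by
          refine Finset.sum_le_sum fun k hk => ?_
          exact pow_le_pow_of_le_one h0 h1.le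
            (Nat.le_sub_one_of_lt (Finset.mem_range.mp hk))
  have h1a : (0 : ℝ) ≤ 1 - a := by linarith
  calc (n : ℝ) * a ^ (n - 1) * (1 - a)
      ≤ (∑ k ∈ Finset.range n, a ^ k) * (1 - a) := by
        exact mul_le_mul_of_nonneg_right hsum h1a
    _ = 1 - a ^ n := by
        have := geom_sum_mul (a) n
        linarith [this]
    _ ≤ 1 := by nlinarith [pow_nonneg h0 n]

/-- For i.i.d. standard exponential random variables (`F(x) = 1 - e^(-x)`, `p(x) = e^(-x)`),
the probability that `X_(n-1) ≤ κ X_(n)` tends to `0` as `n → ∞`, for fixed `κ ∈ (0,1)`: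
`lim_{n→∞} n ∫_0^∞ (1 - e^(-κ y))^(n-1) e^(-y) dy = 0`. -/
theorem exponential_outlier_integral_tendsto_zero
    (κ : ℝ) (hκ : κ ∈ Ioo (0 : ℝ) 1) :
    Tendsto (fun n : ℕ =>
        (n : ℝ) * ∫ y in Ioi (0 : ℝ),
          (1 - Real.exp (-(κ * y))) ^ (n - 1) * Real.exp (-y))
      atTop (nhds 0) := by
  obtain ⟨hκ0, hκ1⟩ := hκ
  have hmain : Tendsto (fun n : ℕ =>
      ∫ y in Ioi (0 : ℝ),
        (n : ℝ) * ((1 - Real.exp (-(κ * y))) ^ (n - 1) * Real.exp (-y)))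
      atTop (nhds 0) := by
    suffices h : Tendsto (fun n : ℕ =>
        ∫ y in Ioi (0 : ℝ),
          (n : ℝ) * ((1 - Real.exp (-(κ * y))) ^ (n - 1) * Real.exp (-y)))
        atTop (nhds (∫ _y in Ioi (0 : ℝ), (0 : ℝ))) by simpa using h
    refine tendsto_integral_of_dominated_convergence
      (F := fun (n : ℕ) (y : ℝ) => (n : ℝ) * ((1 - Real.exp (-(κ * y))) ^ (n - 1) * Real.exp (-y)))
      (f := fun _ => (0 : ℝ))
      (fun y => Real.exp (-(1 - κ) * y)) ?_ ?_ ?_ ?_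
    · intro n
      exact (by fun_prop : Continuous fun y : ℝ =>
        (n : ℝ) * ((1 - Real.exp (-(κ * y))) ^ (n - 1) * Real.exp (-y))).aestronglyMeasurable
    · exact exp_neg_integrableOn_Ioi 0 (by linarith)
    · intro n
      refine (ae_restrict_iff' measurableSet_Ioi).mpr (Filter.Eventually.of_forall ?_)
      intro y hy
      have hy0 : (0 : ℝ) < y := hy
      set a : ℝ := 1 - Real.exp (-(κ * y)) with ha
      have hea : Real.exp (-(κ * y)) ≤ 1 :=
        Real.exp_le_one_iff.mpr (by nlinarith [mul_pos hκ0 hy0])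
      have ha0 : 0 ≤ a := by rw [ha]; linarith [hea]
      have ha1 : a < 1 := by
        have := Real.exp_pos (-(κ * y)); rw [ha]; linarith
      have h1a : 1 - a = Real.exp (-(κ * y)) := by simp [ha]
      have hkey : (n : ℝ) * a ^ (n - 1) ≤ Real.exp (κ * y) := by
        have hb := aux_geom_bound a ha0 ha1 n
        rw [h1a] at hb
        have hpos : (0 : ℝ) < Real.exp (-(κ * y)) := Real.exp_pos _
        have hmul : Real.exp (κ * y) * Real.exp (-(κ * y)) = 1 := by
          rw [← Real.exp_add, add_neg_cancel, Real.exp_zero]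
        nlinarith [hb, hpos, hmul]
      have hnn : 0 ≤ (n : ℝ) * (a ^ (n - 1) * Real.exp (-y)) := by positivity
      rw [Real.norm_eq_abs, abs_of_nonneg hnn]
      have : (n : ℝ) * (a ^ (n - 1) * Real.exp (-y))
          ≤ Real.exp (κ * y) * Real.exp (-y) := by
        rw [← mul_assoc]
        exact mul_le_mul_of_nonneg_right hkey (Real.exp_pos _).le
      calc (n : ℝ) * (a ^ (n - 1) * Real.exp (-y))
          ≤ Real.exp (κ * y) * Real.exp (-y) := this
        _ = Real.exp (-(1 - κ) * y) := by rw [← Real.exp_add]; ring_nf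
    · refine (ae_restrict_iff' measurableSet_Ioi).mpr (Filter.Eventually.of_forall ?_)
      intro y hy
      have hy0 : (0 : ℝ) < y := hy
      set a : ℝ := 1 - Real.exp (-(κ * y)) with ha
      have hea : Real.exp (-(κ * y)) ≤ 1 :=
        Real.exp_le_one_iff.mpr (by nlinarith [mul_pos hκ0 hy0])
      have ha0 : 0 ≤ a := by rw [ha]; linarith [hea]
      have ha1 : a < 1 := by
        have := Real.exp_pos (-(κ * y)); rw [ha]; linarith
      have hna : ‖a‖ < 1 := by rw [Real.norm_eq_abs, abs_of_nonneg ha0]; exact ha1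
      -- limit of (m+1) * a^m * e^{-y}
      have h1 : Tendsto (fun m : ℕ => (m : ℝ) * a ^ m) atTop (nhds 0) := by
        have := (summable_pow_mul_geometric_of_norm_lt_one 1 hna).tendsto_atTop_zero
        simpa using this
      have h2 : Tendsto (fun m : ℕ => a ^ m) atTop (nhds 0) :=
        tendsto_pow_atTop_nhds_zero_of_norm_lt_one hna
      have h3 : Tendsto (fun m : ℕ => ((m : ℝ) + 1) * a ^ m * Real.exp (-y))
          atTop (nhds 0) := by
        have := ((h1.add h2).mul_const (Real.exp (-y)))
        simp only [zero_add, zero_mul] at this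
        convert this using 2 with m
        ring
      have h4 := h3.comp (tendsto_sub_atTop_nat 1)
      apply h4.congr'
      filter_upwards [eventually_ge_atTop 1] with n hn
      have : ((n - 1 : ℕ) : ℝ) + 1 = (n : ℝ) := by
        have : n - 1 + 1 = n := Nat.succ_pred_eq_of_pos hn
        exact_mod_cast congrArg (Nat.cast : ℕ → ℝ) this
      simp [Function.comp, this]
      ring
  apply hmain.congr
  intro n
  rw [← integral_const_mul]
end
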